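/- Let μ ≥ 2 and let M₀ be a real number with 0 ≤ M₀ < μ and G_μ(M₀) ≤ 1/4. Then ∫_{M₀}^μ G_μ(t) dt ≤ ((8π − 3√2)/(16(4π − √2)))·(μ − M₀). (In the paper M₀ = ⌊G_μ^{−1}(1/4)⌋ + 1, which satisfies these hypotheses.) -/

import Mathlib

/-- The function `g(x) = (1/π)(√(1−x²) − x·arccos x)`. -/
noncomputable def g (x : ℝ) : ℝ := (1 / Real.pi) * (Real.sqrt (1 - x ^ 2) - x * Real.arccos x)

/-- For `μ > 0`, `G_μ(x) = μ·g(x/μ)`. -/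
noncomputable def G (μ x : ℝ) : ℝ := μ * g (x / μ)

/-!
Since `g' = -arccos / π` and `√(2(1 - x)) ≤ arccos x ≤ (11/10) √(2(1 - x))` (the upper bound for
`x ≥ 0.44`, via the half-angle formula `√(2(1 - x)) = 2 sin (arccos x / 2)`), comparing derivatives
from the common zero at `x = 1` pinches `g` between `q / (3π)` and `(11/10) q / (3π)`, where
`q x = (2(1 - x))^{3/2}`. As `∫ₓ¹ q = (2/5)(1 - x) q x`, this gives `∫ₓ¹ g ≤ (11/25)(1 - x) g x`,
and rescaling, `∫_{M₀}^μ G_μ ≤ (11/25)(μ - M₀) G_μ(M₀) ≤ (11/100)(μ - M₀)`. The lower bound is also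
what places `M₀ / μ` in the range `x ≥ 0.44`: there `g (M₀ / μ) = G_μ(M₀) / μ ≤ 1/8`.
-/

open Real Set intervalIntegral

lemma continuous_g : Continuous g := by
  unfold g
  fun_prop

lemma g_one : g 1 = 0 := by simp [g]

lemma hasDerivAt_g {x : ℝ} (h₁ : -1 < x) (h₂ : x < 1) :
    HasDerivAt g (-arccos x / π) x := by
  have hpos : 0 < 1 - x ^ 2 := by nlinarith
  have hsqrt : HasDerivAt (fun y => √(1 - y ^ 2)) (-(2 * x) / (2 * √(1 - x ^ 2))) x := by
    simpa using ((hasDerivAt_pow 2 x).const_sub 1).sqrt hpos.ne'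
  have hmul : HasDerivAt (fun y => y * arccos y) (1 * arccos x + x * -(1 / √(1 - x ^ 2))) x :=
    (hasDerivAt_id x).mul (hasDerivAt_arccos h₁.ne' h₂.ne)
  have : √(1 - x ^ 2) ≠ 0 := by positivity
  exact ((hsqrt.sub hmul).const_mul (1 / π)).congr_deriv (by field_simp; ring)

lemma sqrt_two_mul_one_sub_eq {x : ℝ} (h₁ : -1 ≤ x) (h₂ : x ≤ 1) :
    √(2 * (1 - x)) = 2 * sin (arccos x / 2) := by
  have hsin : 0 ≤ sin (arccos x / 2) :=
    sin_nonneg_of_nonneg_of_le_pi (by linarith [arccos_nonneg x])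
      (by linarith [arccos_le_pi x, pi_pos])
  have hcos : x = 1 - 2 * sin (arccos x / 2) ^ 2 := by
    rw [← cos_two_mul_eq_one_sub, mul_div_cancel₀ _ two_ne_zero, cos_arccos h₁ h₂]
  rw [show 2 * (1 - x) = (2 * sin (arccos x / 2)) ^ 2 by linear_combination -2 * hcos,
    sqrt_sq (by positivity)]

lemma sqrt_two_mul_one_sub_le_arccos {x : ℝ} (h₁ : -1 ≤ x) (h₂ : x ≤ 1) :
    √(2 * (1 - x)) ≤ arccos x := by
  rw [sqrt_two_mul_one_sub_eq h₁ h₂]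
  linarith [sin_le (by linarith [arccos_nonneg x] : 0 ≤ arccos x / 2)]

lemma arccos_le_pi_div_two_sub {x : ℝ} (h₁ : 0 ≤ x) (h₂ : x ≤ 1) : arccos x ≤ π / 2 - x := by
  have : x ≤ arcsin x :=
    (le_arcsin_iff_sin_le ⟨by linarith [pi_pos], by linarith [pi_gt_three]⟩ ⟨by linarith, h₂⟩).2
      (sin_le h₁)
  rw [arccos_eq_pi_div_two_sub_arcsin]
  linarith

lemma arccos_le_sqrt_two_mul_one_sub {x : ℝ} (h₁ : 0.44 ≤ x) (h₂ : x ≤ 1) :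
    arccos x ≤ 11 / 10 * √(2 * (1 - x)) := by
  have hθ := arccos_le_pi_div_two_sub (by linarith) h₂
  rw [sqrt_two_mul_one_sub_eq (by linarith) h₂]
  obtain ⟨t, ht⟩ : ∃ t, arccos x = 2 * t := ⟨arccos x / 2, by ring⟩
  rw [ht, mul_div_cancel_left₀ _ two_ne_zero]
  rw [ht] at hθ
  have ht₀ : 0 ≤ t := by linarith [arccos_nonneg x]
  have ht₁ : t ≤ 0.6 := by linarith [pi_lt_d2]
  -- on `[0, 0.6]`, `sin t ≥ t - t ^ 3 / 6 ≥ (10 / 11) t`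
  nlinarith [sin_ge_sub_cube ht₀, mul_nonneg ht₀ (mul_nonneg ht₀ ht₀)]

lemma le_of_hasDerivAt_le_of_le_right {f h f' h' : ℝ → ℝ} {a b : ℝ}
    (hf : ContinuousOn f (Icc a b)) (hh : ContinuousOn h (Icc a b))
    (hf' : ∀ x ∈ Ioo a b, HasDerivAt f (f' x) x) (hh' : ∀ x ∈ Ioo a b, HasDerivAt h (h' x) x)
    (hderiv : ∀ x ∈ Ioo a b, f' x ≤ h' x) (hb : h b ≤ f b) {x : ℝ} (hx : x ∈ Icc a b) :
    h x ≤ f x := by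
  have hmono : MonotoneOn (h - f) (Icc a b) := by
    refine monotoneOn_of_hasDerivWithinAt_nonneg (convex_Icc a b) (hh.sub hf) (f' := h' - f')
      (fun y hy ↦ ?_) (fun y hy ↦ ?_) <;> rw [interior_Icc] at hy
    · exact ((hh' y hy).sub (hf' y hy)).hasDerivWithinAt
    · exact sub_nonneg.2 (hderiv y hy)
  have := hmono hx ⟨hx.1.trans hx.2, le_rfl⟩ hx.2
  simp only [Pi.sub_apply] at this
  linarith

lemma hasDerivAt_two_mul_one_sub_rpow (x : ℝ) :
    HasDerivAt (fun y ↦ (2 * (1 - y)) ^ (3 / 2 : ℝ)) (-3 * √(2 * (1 - x))) x := by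
  have hlin : HasDerivAt (fun y ↦ 2 * (1 - y)) (-2) x := by
    simpa using ((hasDerivAt_id x).const_sub 1).const_mul 2
  refine (hlin.rpow_const (Or.inr (by norm_num))).congr_deriv ?_
  rw [sqrt_eq_rpow]
  norm_num

lemma continuous_two_mul_one_sub_rpow : Continuous (fun y : ℝ ↦ (2 * (1 - y)) ^ (3 / 2 : ℝ)) :=
  by fun_prop (disch := norm_num)

lemma two_mul_one_sub_rpow_div_le_g {x : ℝ} (h₁ : -1 ≤ x) (h₂ : x ≤ 1) :
    (2 * (1 - x)) ^ (3 / 2 : ℝ) / (3 * π) ≤ g x := by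
  refine le_of_hasDerivAt_le_of_le_right continuous_g.continuousOn
    (continuous_two_mul_one_sub_rpow.div_const _).continuousOn
    (fun y hy ↦ hasDerivAt_g hy.1 hy.2)
    (fun y _ ↦ (hasDerivAt_two_mul_one_sub_rpow y).div_const _)
    (fun y hy ↦ ?_) (by simp [g_one]) ⟨h₁, h₂⟩
  have := sqrt_two_mul_one_sub_le_arccos hy.1.le hy.2.le
  rw [div_le_div_iff₀ pi_pos (by positivity)]
  nlinarith [pi_pos]

lemma g_nonneg {x : ℝ} (h₁ : -1 ≤ x) (h₂ : x ≤ 1) : 0 ≤ g x := by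
  have : 0 ≤ 2 * (1 - x) := by linarith
  exact le_trans (by positivity) (two_mul_one_sub_rpow_div_le_g h₁ h₂)

lemma g_le_two_mul_one_sub_rpow_div {x : ℝ} (h₁ : 0.44 ≤ x) (h₂ : x ≤ 1) :
    g x ≤ 11 / 10 * ((2 * (1 - x)) ^ (3 / 2 : ℝ) / (3 * π)) := by
  refine le_of_hasDerivAt_le_of_le_right
    (continuous_const.mul (continuous_two_mul_one_sub_rpow.div_const _)).continuousOn
    continuous_g.continuousOn
    (fun y _ ↦ ((hasDerivAt_two_mul_one_sub_rpow y).div_const _).const_mul _)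
    (fun y hy ↦ hasDerivAt_g (by linarith [hy.1]) hy.2)
    (fun y hy ↦ ?_) (by simp [g_one]) ⟨h₁, h₂⟩
  have := arccos_le_sqrt_two_mul_one_sub hy.1.le hy.2.le
  rw [mul_div_assoc', div_le_div_iff₀ (by positivity) pi_pos]
  nlinarith [pi_pos]

lemma integral_two_mul_one_sub_rpow {x : ℝ} (hx : x ≤ 1) :
    ∫ s in x..1, (2 * (1 - s)) ^ (3 / 2 : ℝ) = 2 / 5 * (1 - x) * (2 * (1 - x)) ^ (3 / 2 : ℝ) := by
  have h := integral_comp_sub_mul (fun u : ℝ ↦ u ^ (3 / 2 : ℝ)) (a := x) (b := 1) two_ne_zero 2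
  simp only [mul_one, sub_self] at h
  rw [show (fun s : ℝ ↦ (2 * (1 - s)) ^ (3 / 2 : ℝ)) = fun s ↦ (2 - 2 * s) ^ (3 / 2 : ℝ) by
    ext s; ring_nf, h, integral_rpow (Or.inl (by norm_num)),
    show (3 / 2 : ℝ) + 1 = 1 + 3 / 2 by norm_num, rpow_one_add' (by linarith) (by norm_num),
    zero_rpow (by norm_num), show (2 : ℝ) - 2 * x = 2 * (1 - x) by ring, smul_eq_mul]
  ring

lemma integral_g_le {x : ℝ} (h₁ : 0.44 ≤ x) (h₂ : x ≤ 1) :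
    ∫ s in x..1, g s ≤ 11 / 25 * (1 - x) * g x := by
  have hq : Continuous fun s : ℝ ↦ 11 / 10 * ((2 * (1 - s)) ^ (3 / 2 : ℝ) / (3 * π)) := by
    fun_prop (disch := norm_num)
  calc ∫ s in x..1, g s
      ≤ ∫ s in x..1, 11 / 10 * ((2 * (1 - s)) ^ (3 / 2 : ℝ) / (3 * π)) :=
        integral_mono_on h₂ (continuous_g.intervalIntegrable _ _) (hq.intervalIntegrable _ _)
          fun s hs ↦ g_le_two_mul_one_sub_rpow_div (h₁.trans hs.1) hs.2
    _ = 11 / 25 * (1 - x) * ((2 * (1 - x)) ^ (3 / 2 : ℝ) / (3 * π)) := by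
        rw [integral_const_mul, intervalIntegral.integral_div, integral_two_mul_one_sub_rpow h₂]
        ring
    _ ≤ 11 / 25 * (1 - x) * g x := by
        gcongr
        exact two_mul_one_sub_rpow_div_le_g (by linarith) h₂

lemma le_of_g_le_one_div_eight {x : ℝ} (h₁ : -1 ≤ x) (h₂ : x ≤ 1) (hg : g x ≤ 1 / 8) :
    0.44 ≤ x := by
  by_contra! hx
  have hu : 1.12 < 2 * (1 - x) := by linarith
  have hsqrt : 1.058 < √(2 * (1 - x)) := lt_sqrt_of_sq_lt (by linarith)
  have hpow : (2 * (1 - x)) ^ (3 / 2 : ℝ) = 2 * (1 - x) * √(2 * (1 - x)) := by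
    rw [sqrt_eq_rpow, ← rpow_one_add' (by linarith) (by norm_num)]
    norm_num
  have := (two_mul_one_sub_rpow_div_le_g h₁ h₂).trans hg
  rw [hpow, div_le_iff₀ (by positivity)] at this
  nlinarith [pi_lt_d4]

lemma integral_G (μ a b : ℝ) (hμ : μ ≠ 0) :
    ∫ t in a..b, G μ t = μ ^ 2 * ∫ s in a / μ..b / μ, g s := by
  simp only [G]
  rw [integral_const_mul, integral_comp_div g hμ, smul_eq_mul]
  ring

lemma eleven_div_hundred_le :
    11 / 100 ≤ (8 * π - 3 * √2) / (16 * (4 * π - √2)) := by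
  have h₁ : √2 < 1.415 := (sqrt_lt' (by norm_num : (0 : ℝ) < 1.415)).2 (by norm_num)
  have h₂ : 1.414 < √2 := lt_sqrt_of_sq_lt (by norm_num)
  rw [le_div_iff₀ (by linarith [pi_gt_three])]
  linarith [pi_gt_three]

/-- Corollary 2.6: for `μ ≥ 2` and `0 ≤ M₀ < μ` with `G_μ(M₀) ≤ 1/4`,
`∫_{M₀}^μ G_μ(t) dt ≤ ((8π − 3√2)/(16(4π − √2)))·(μ − M₀)`. -/
theorem stmt4 (μ M₀ : ℝ) (hμ : 2 ≤ μ) (hM0 : 0 ≤ M₀) (hM : M₀ < μ)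
    (hG : G μ M₀ ≤ 1 / 4) :
    (∫ t in M₀..μ, G μ t) ≤
      (8 * Real.pi - 3 * Real.sqrt 2) / (16 * (4 * Real.pi - Real.sqrt 2)) * (μ - M₀) := by
  have hμ₀ : 0 < μ := by linarith
  set x := M₀ / μ
  have hx₀ : 0 ≤ x := div_nonneg hM0 hμ₀.le
  have hx₁ : x ≤ 1 := (div_le_one hμ₀).2 hM.le
  have hGx : G μ M₀ = μ * g x := rfl
  have hgx : 0 ≤ g x := g_nonneg (by linarith) hx₁
  have hx : 0.44 ≤ x := le_of_g_le_one_div_eight (by linarith) hx₁ (by nlinarith)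
  calc ∫ t in M₀..μ, G μ t = μ ^ 2 * ∫ s in x..1, g s := by
        rw [integral_G μ M₀ μ hμ₀.ne', div_self hμ₀.ne']
    _ ≤ μ ^ 2 * (11 / 25 * (1 - x) * g x) := by gcongr; exact integral_g_le hx hx₁
    _ = 11 / 25 * (μ - M₀) * G μ M₀ := by
        rw [hGx, ← mul_div_cancel₀ M₀ hμ₀.ne']
        ring
    _ ≤ 11 / 100 * (μ - M₀) := by nlinarith
    _ ≤ _ := mul_le_mul_of_nonneg_right eleven_div_hundred_le (by linarith)
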